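/- Let X be a median graph and 𝒥 a collection of hyperplanes of X, with canonical projection π : X → X\\𝒥 onto the hyperplane-collapse. Then for all vertices x, y of X, the distance d(π(x), π(y)) in X\\𝒥 equals the number of hyperplanes of X not belonging to 𝒥 that separate x and y. -/

import Mathlib

open SimpleGraph

variable {V : Type*}

/-- Triangle condition of weak modularity. -/
def TriangleCond (X : SimpleGraph V) : Prop :=
  ∀ o x y : V, X.Adj x y → X.dist o x = X.dist o y →
    ∃ w : V, X.Adj w x ∧ X.Adj w y ∧ X.dist o w + 1 = X.dist o x

/-- Quadrangle condition of weak modularity. -/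
def QuadCond (X : SimpleGraph V) : Prop :=
  ∀ o x y z : V, X.Adj z x → X.Adj z y → X.dist x y = 2 →
    X.dist o z = X.dist o x + 1 → X.dist o z = X.dist o y + 1 →
    ∃ w : V, X.Adj w x ∧ X.Adj w y ∧ X.dist o w + 2 = X.dist o z

/-- No induced copy of the complete bipartite graph `K_{2,3}`. -/
def NoInducedK23 (X : SimpleGraph V) : Prop :=
  ¬ ∃ a b x y z : V, a ≠ b ∧ x ≠ y ∧ y ≠ z ∧ x ≠ z ∧
    X.Adj a x ∧ X.Adj a y ∧ X.Adj a z ∧ X.Adj b x ∧ X.Adj b y ∧ X.Adj b z ∧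
    ¬ X.Adj a b ∧ ¬ X.Adj x y ∧ ¬ X.Adj y z ∧ ¬ X.Adj x z

/-- No induced copy of `K₄` minus an edge. -/
def NoInducedK4minus (X : SimpleGraph V) : Prop :=
  ¬ ∃ a b c d : V, X.Adj a b ∧ X.Adj a c ∧ X.Adj a d ∧ X.Adj b c ∧ X.Adj b d ∧
    c ≠ d ∧ ¬ X.Adj c d

/-- A quasi-median graph: a connected weakly modular graph with no induced
`K_{2,3}` and no induced `K₄⁻`. -/
def QuasiMedian (X : SimpleGraph V) : Prop :=
  X.Connected ∧ TriangleCond X ∧ QuadCond X ∧ NoInducedK23 X ∧ NoInducedK4minus X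

/-- `m` lies on a geodesic from `a` to `b`. -/
def InInterval (X : SimpleGraph V) (a m b : V) : Prop :=
  X.dist a m + X.dist m b = X.dist a b

/-- `m` is a median of the triple `a, b, c`. -/
def IsMedianOf (X : SimpleGraph V) (m a b c : V) : Prop :=
  InInterval X a m b ∧ InInterval X b m c ∧ InInterval X a m c

/-- A median graph: connected, and every triple of vertices has a unique median. -/
def MedianGraph (X : SimpleGraph V) : Prop :=
  X.Connected ∧ ∀ a b c : V, ∃! m : V, IsMedianOf X m a b c

/-- The elementary relation on edges generating hyperplanes: two edges of a common
triangle, or opposite edges of an induced 4-cycle. -/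
def EdgeRel (X : SimpleGraph V) (e f : Sym2 V) : Prop :=
  (∃ a b c : V, X.Adj a b ∧ X.Adj b c ∧ X.Adj a c ∧ e = s(a, b) ∧ f = s(b, c)) ∨
  (∃ a b c d : V, X.Adj a b ∧ X.Adj b c ∧ X.Adj c d ∧ X.Adj d a ∧
    a ≠ c ∧ ¬ X.Adj a c ∧ b ≠ d ∧ ¬ X.Adj b d ∧ e = s(a, b) ∧ f = s(c, d))

/-- A hyperplane: an equivalence class of edges under the reflexive-transitive
closure of `EdgeRel`. -/
def IsHyperplane (X : SimpleGraph V) (J : Set (Sym2 V)) : Prop :=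
  ∃ e ∈ X.edgeSet, J = {f | Relation.ReflTransGen (EdgeRel X) e f}

/-- The hyperplane `J` separates `x` and `y`. -/
def SeparatesPts (X : SimpleGraph V) (J : Set (Sym2 V)) (x y : V) : Prop :=
  ¬ (X.deleteEdges J).Reachable x y

/-- A sector delimited by `J`: a connected component of `X` minus the edges of `J`. -/
def IsSectorOf (X : SimpleGraph V) (J : Set (Sym2 V)) (S : Set V) : Prop :=
  ∃ v : V, S = {w | (X.deleteEdges J).Reachable v w}

/-- A gated subset of vertices. -/
def IsGated (X : SimpleGraph V) (Y : Set V) : Prop :=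
  Y.Nonempty ∧ ∀ x : V, ∃ y ∈ Y, ∀ z ∈ Y, X.dist x z = X.dist x y + X.dist y z

/-- The gated hull of a set of vertices. -/
def GatedHull (X : SimpleGraph V) (A : Set V) : Set V :=
  ⋂₀ {Y : Set V | IsGated X Y ∧ A ⊆ Y}

/-- A polytope: the gated hull of a non-empty finite set of vertices. -/
def IsPolytope (X : SimpleGraph V) (P : Set V) : Prop :=
  ∃ A : Finset V, A.Nonempty ∧ P = GatedHull X (A : Set V)

/-- `HypOf X Y`: the hyperplanes separating two vertices of `Y` (the hyperplanes
crossing `Y`). -/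
def HypOf (X : SimpleGraph V) (Y : Set V) : Set (Set (Sym2 V)) :=
  {J | IsHyperplane X J ∧ ∃ a ∈ Y, ∃ b ∈ Y, SeparatesPts X J a b}

/-- The hyperplanes separating `A` from `B` (placing them in two distinct sectors). -/
def SepHyp (X : SimpleGraph V) (A B : Set V) : Set (Set (Sym2 V)) :=
  {J | IsHyperplane X J ∧ ∃ S T : Set V, IsSectorOf X J S ∧ IsSectorOf X J T ∧
    S ≠ T ∧ A ⊆ S ∧ B ⊆ T}

/-- The covering relation for polytopes: `P ⊊ Q` with no polytope strictly between. -/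
def PolyCover (X : SimpleGraph V) (P Q : Set V) : Prop :=
  IsPolytope X P ∧ IsPolytope X Q ∧ P ⊂ Q ∧
    ¬ ∃ R : Set V, IsPolytope X R ∧ P ⊂ R ∧ R ⊂ Q

abbrev PolyVert (X : SimpleGraph V) := {P : Set V // IsPolytope X P}

/-- The graph of polytopes: the covering graph of the inclusion poset of polytopes. -/
def PolyGraph (X : SimpleGraph V) : SimpleGraph (PolyVert X) where
  Adj P Q := PolyCover X P.val Q.val ∨ PolyCover X Q.val P.val
  symm := by constructor; intro P Q h; exact h.symm
  loopless := by constructor; intro P h; rcases h with h | h <;> exact (ssubset_irrefl P.val) h.2.2.1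

/-- Two hyperplanes are transverse: there is an induced 4-cycle whose two pairs of
opposite edges belong respectively to the two hyperplanes. -/
def Transverse (X : SimpleGraph V) (J₁ J₂ : Set (Sym2 V)) : Prop :=
  ∃ a b c d : V, X.Adj a b ∧ X.Adj b c ∧ X.Adj c d ∧ X.Adj d a ∧
    a ≠ c ∧ ¬ X.Adj a c ∧ b ≠ d ∧ ¬ X.Adj b d ∧
    s(a, b) ∈ J₁ ∧ s(c, d) ∈ J₁ ∧ s(b, c) ∈ J₂ ∧ s(d, a) ∈ J₂

/-- A prism: a polytope whose crossing hyperplanes are pairwise transverse (this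
characterises the gated subgraphs decomposing as finite products of cliques). -/
def IsPrism (X : SimpleGraph V) (P : Set V) : Prop :=
  IsPolytope X P ∧ ∀ J₁ ∈ HypOf X P, ∀ J₂ ∈ HypOf X P, J₁ ≠ J₂ → Transverse X J₁ J₂

/-- The covering relation for prisms. -/
def PrismCover (X : SimpleGraph V) (P Q : Set V) : Prop :=
  IsPrism X P ∧ IsPrism X Q ∧ P ⊂ Q ∧
    ¬ ∃ R : Set V, IsPrism X R ∧ P ⊂ R ∧ R ⊂ Q

abbrev PrismVert (X : SimpleGraph V) := {P : Set V // IsPrism X P}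

/-- The graph of prisms. -/
def PrismGraph (X : SimpleGraph V) : SimpleGraph (PrismVert X) where
  Adj P Q := PrismCover X P.val Q.val ∨ PrismCover X Q.val P.val
  symm := by constructor; intro P Q h; exact h.symm
  loopless := by constructor; intro P h; rcases h with h | h <;> exact (ssubset_irrefl P.val) h.2.2.1

/-- A convex set of vertices: closed under taking points on geodesics. -/
def IsConvexSet (X : SimpleGraph V) (Y : Set V) : Prop :=
  ∀ a ∈ Y, ∀ b ∈ Y, ∀ m : V, InInterval X a m b → m ∈ Y

/-- The convex hull of a set of vertices. -/
def ConvHull (X : SimpleGraph V) (A : Set V) : Set V :=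
  ⋂₀ {Y : Set V | IsConvexSet X Y ∧ A ⊆ Y}

/-- The subgraph of `X` induced on `Y` (kept on the same vertex set). -/
def RestrictTo (X : SimpleGraph V) (Y : Set V) : SimpleGraph V where
  Adj a b := X.Adj a b ∧ a ∈ Y ∧ b ∈ Y
  symm := by constructor; intro a b h; exact ⟨h.1.symm, h.2.2, h.2.1⟩
  loopless := by constructor; intro a h; exact X.irrefl h.1

/-- The setoid identifying the endpoints of every edge whose hyperplane lies
in `𝒥` (edge contraction). -/
def collapseSetoid (X : SimpleGraph V) (𝒥 : Set (Set (Sym2 V))) : Setoid V :=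
  Relation.EqvGen.setoid (fun x y => X.Adj x y ∧ ∃ J ∈ 𝒥, s(x, y) ∈ J)

/-- The hyperplane-collapse `X\\𝒥`, obtained by collapsing all edges belonging
to hyperplanes of `𝒥`. -/
def CollapseGraph (X : SimpleGraph V) (𝒥 : Set (Set (Sym2 V))) :
    SimpleGraph (Quotient (collapseSetoid X 𝒥)) :=
  SimpleGraph.fromRel (fun u v => ∃ x y : V, X.Adj x y ∧
    Quotient.mk (collapseSetoid X 𝒥) x = u ∧ Quotient.mk (collapseSetoid X 𝒥) y = v)

/-! In a median graph the distances from any vertex to the two ends of an edge `s(u, v)`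
differ by exactly one, which splits the vertices into a `u`-side and a `v`-side. Squares
preserve this splitting, and conversely, taking medians, every edge from one side to the other
is joined to `s(u, v)` by a chain of squares; so the hyperplane of `s(u, v)` separates exactly
the pairs on different sides. Each step of a geodesic from `x` to `y` therefore crosses exactly
one new separating hyperplane, and it is collapsed precisely when that hyperplane lies in `𝒥`.
Conversely an edge of `X\\𝒥` lifts to an edge of `X`, which crosses at most one hyperplane,
and vertices identified in `X\\𝒥` are not separated by any hyperplane outside `𝒥`. -/

open Relation

namespace SimpleGraph

variable {G : SimpleGraph V}

lemma Adj.dist_le_dist_add_one {a b : V} (h : G.Adj a b) (w : V) :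
    G.dist b w ≤ G.dist a w + 1 := by
  simpa [dist_eq_one_iff_adj.mpr h.symm, add_comm] using h.symm.reachable.dist_triangle_left w

lemma exists_adj_dist_add_one_eq {a u : V} (h : G.dist a u ≠ 0) :
    ∃ b, G.Adj a b ∧ G.dist b u + 1 = G.dist a u := by
  obtain ⟨p, hp⟩ := exists_walk_of_dist_ne_zero h
  cases p with
  | nil => exact absurd hp.symm h
  | cons hab p =>
    refine ⟨_, hab, le_antisymm ?_ (hab.symm.dist_le_dist_add_one u)⟩
    rw [← hp, Walk.length_cons]
    exact Nat.add_le_add_right (dist_le p) 1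

end SimpleGraph

variable {X : SimpleGraph V} {𝒥 : Set (Set (Sym2 V))}

def hyperplaneOf (X : SimpleGraph V) (e : Sym2 V) : Set (Sym2 V) :=
  {f | ReflTransGen (EdgeRel X) e f}

instance : Std.Symm (EdgeRel X) where
  symm := by
    rintro e f (⟨a, b, c, hab, hbc, hac, rfl, rfl⟩ |
      ⟨a, b, c, d, hab, hbc, hcd, hda, hac, hnac, hbd, hnbd, rfl, rfl⟩)
    · exact Or.inl ⟨c, b, a, hbc.symm, hab.symm, hac.symm, Sym2.eq_swap, Sym2.eq_swap⟩
    · exact Or.inr ⟨c, d, a, b, hcd, hda, hab, hbc, hac.symm, fun h => hnac h.symm,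
        hbd.symm, fun h => hnbd h.symm, rfl, rfl⟩

lemma isHyperplane_hyperplaneOf {u v : V} (h : X.Adj u v) :
    IsHyperplane X (hyperplaneOf X s(u, v)) :=
  ⟨s(u, v), h, rfl⟩

lemma IsHyperplane.eq_hyperplaneOf {J : Set (Sym2 V)} (hJ : IsHyperplane X J) {e : Sym2 V}
    (he : e ∈ J) : J = hyperplaneOf X e := by
  obtain ⟨e₀, -, rfl⟩ := hJ
  ext f
  exact ⟨(Std.Symm.symm _ _ he).trans, he.trans⟩

lemma separatesPts_iff_of_adj {J : Set (Sym2 V)} {x u : V} (hxu : X.Adj x u)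
    (hJ : s(x, u) ∉ J) (y : V) : SeparatesPts X J x y ↔ SeparatesPts X J u y :=
  have hr := (deleteEdges_adj.mpr ⟨hxu, hJ⟩).reachable
  not_congr ⟨hr.symm.trans, hr.trans⟩

lemma SeparatesPts.left_or_right {J : Set (Sym2 V)} {a b : V} (h : SeparatesPts X J a b)
    (c : V) : SeparatesPts X J a c ∨ SeparatesPts X J c b := by
  by_contra! hn
  exact h (not_not.mp hn.1 |>.trans (not_not.mp hn.2))

def sepHypsOutside (X : SimpleGraph V) (𝒥 : Set (Set (Sym2 V))) (x y : V) :
    Set (Set (Sym2 V)) :=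
  {J | IsHyperplane X J ∧ J ∉ 𝒥 ∧ SeparatesPts X J x y}

lemma sepHypsOutside_self (x : V) : sepHypsOutside X 𝒥 x x = ∅ :=
  Set.eq_empty_of_forall_notMem fun _ hJ => hJ.2.2 (Reachable.refl x)

lemma sepHypsOutside_subset_insert {x u : V} (hxu : X.Adj x u) (y : V) :
    sepHypsOutside X 𝒥 x y ⊆ insert (hyperplaneOf X s(x, u)) (sepHypsOutside X 𝒥 u y) := by
  rintro J ⟨hJ, hJ𝒥, hsep⟩
  by_cases hmem : s(x, u) ∈ J
  · exact Or.inl (hJ.eq_hyperplaneOf hmem)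
  · exact Or.inr ⟨hJ, hJ𝒥, (separatesPts_iff_of_adj hxu hmem y).mp hsep⟩

lemma sepHypsOutside_subset_union (a b c : V) :
    sepHypsOutside X 𝒥 a b ⊆ sepHypsOutside X 𝒥 a c ∪ sepHypsOutside X 𝒥 c b := by
  rintro J ⟨hJ, hJ𝒥, hsep⟩
  exact (hsep.left_or_right c).imp (⟨hJ, hJ𝒥, ·⟩) (⟨hJ, hJ𝒥, ·⟩)

lemma ncard_sepHypsOutside_le_one_of_adj {c d : V} (hcd : X.Adj c d) :
    (sepHypsOutside X 𝒥 c d).ncard ≤ 1 := by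
  have h := sepHypsOutside_subset_insert (𝒥 := 𝒥) hcd d
  rw [sepHypsOutside_self, insert_empty_eq] at h
  simpa using Set.ncard_le_ncard h

lemma sepHypsOutside_finite (hX : X.Connected) (x y : V) :
    (sepHypsOutside X 𝒥 x y).Finite := by
  obtain ⟨p⟩ := hX.preconnected x y
  induction p with
  | nil => simp [sepHypsOutside_self]
  | cons hxu _ ih => exact (ih.insert _).subset (sepHypsOutside_subset_insert hxu _)

lemma ncard_sepHypsOutside_le_add (hX : X.Connected) (a b c : V) :
    (sepHypsOutside X 𝒥 a b).ncard ≤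
      (sepHypsOutside X 𝒥 a c).ncard + (sepHypsOutside X 𝒥 c b).ncard :=
  (Set.ncard_le_ncard (sepHypsOutside_subset_union a b c)
    ((sepHypsOutside_finite hX a c).union (sepHypsOutside_finite hX c b))).trans
    (Set.ncard_union_le _ _)

lemma mk_eq_of_hyperplaneOf_mem {x u : V} (hxu : X.Adj x u) (h : hyperplaneOf X s(x, u) ∈ 𝒥) :
    Quotient.mk (collapseSetoid X 𝒥) x = Quotient.mk _ u :=
  Quotient.sound (EqvGen.rel x u ⟨hxu, _, h, ReflTransGen.refl⟩)

lemma collapseGraph_adj_mk {x u : V} (hxu : X.Adj x u)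
    (hne : Quotient.mk (collapseSetoid X 𝒥) x ≠ Quotient.mk _ u) :
    (CollapseGraph X 𝒥).Adj (Quotient.mk _ x) (Quotient.mk _ u) :=
  (fromRel_adj _ _ _).mpr ⟨hne, Or.inl ⟨x, u, hxu, rfl, rfl⟩⟩

lemma collapseGraph_dist_mk_le_one {x u : V} (hxu : X.Adj x u) :
    (CollapseGraph X 𝒥).dist (Quotient.mk _ x) (Quotient.mk _ u) ≤ 1 := by
  by_cases h : Quotient.mk (collapseSetoid X 𝒥) x = Quotient.mk _ u
  · simp [h]
  · exact (dist_eq_one_iff_adj.mpr (collapseGraph_adj_mk hxu h)).le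

lemma collapseGraph_reachable_mk {x y : V} (p : X.Walk x y) :
    (CollapseGraph X 𝒥).Reachable (Quotient.mk _ x) (Quotient.mk _ y) := by
  induction p with
  | nil => rfl
  | @cons x u _ hxu _ ih =>
    refine Reachable.trans ?_ ih
    by_cases h : Quotient.mk (collapseSetoid X 𝒥) x = Quotient.mk _ u
    · rw [h]
    · exact (collapseGraph_adj_mk hxu h).reachable

lemma collapseGraph_connected (hX : X.Connected) : (CollapseGraph X 𝒥).Connected := by
  have : Nonempty (Quotient (collapseSetoid X 𝒥)) := hX.nonempty.map (Quotient.mk _)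
  refine Connected.mk fun u v => ?_
  induction u, v using Quotient.inductionOn₂ with
  | h x y => exact (hX.preconnected x y).elim collapseGraph_reachable_mk

lemma reachable_deleteEdges_of_mk_eq (h𝒥 : ∀ J ∈ 𝒥, IsHyperplane X J) {J : Set (Sym2 V)}
    (hJ : IsHyperplane X J) (hJ𝒥 : J ∉ 𝒥) {a b : V}
    (h : Quotient.mk (collapseSetoid X 𝒥) a = Quotient.mk _ b) :
    (X.deleteEdges J).Reachable a b := by
  have hab : EqvGen _ a b := Quotient.exact h
  clear h
  induction hab with
  | rel x y hxy =>
    obtain ⟨hadj, J', hJ', hmem⟩ := hxy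
    refine (deleteEdges_adj.mpr ⟨hadj, fun hmemJ => hJ𝒥 ?_⟩).reachable
    rwa [hJ.eq_hyperplaneOf hmemJ, ← (h𝒥 J' hJ').eq_hyperplaneOf hmem]
  | refl x => rfl
  | symm _ _ _ ih => exact ih.symm
  | trans _ _ _ _ _ ih₁ ih₂ => exact ih₁.trans ih₂

lemma sepHypsOutside_eq_empty_of_mk_eq (h𝒥 : ∀ J ∈ 𝒥, IsHyperplane X J) {a b : V}
    (h : Quotient.mk (collapseSetoid X 𝒥) a = Quotient.mk _ b) :
    sepHypsOutside X 𝒥 a b = ∅ :=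
  Set.eq_empty_of_forall_notMem fun _ ⟨hJ, hJ𝒥, hsep⟩ =>
    hsep (reachable_deleteEdges_of_mk_eq h𝒥 hJ hJ𝒥 h)

lemma ncard_sepHypsOutside_le_length (hX : X.Connected) (h𝒥 : ∀ J ∈ 𝒥, IsHyperplane X J)
    {α β : Quotient (collapseSetoid X 𝒥)} (p : (CollapseGraph X 𝒥).Walk α β) {a b : V}
    (ha : Quotient.mk _ a = α) (hb : Quotient.mk _ b = β) :
    (sepHypsOutside X 𝒥 a b).ncard ≤ p.length := by
  induction p generalizing a with
  | nil => simp [sepHypsOutside_eq_empty_of_mk_eq h𝒥 (ha.trans hb.symm)]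
  | @cons α γ β hadj p ih =>
    obtain ⟨-, hrel⟩ := (fromRel_adj _ _ _).mp hadj
    obtain ⟨c, d, hcd, hc, hd⟩ :
        ∃ c d, X.Adj c d ∧ Quotient.mk _ c = α ∧ Quotient.mk _ d = γ := by
      rcases hrel with ⟨c, d, hcd, hc, hd⟩ | ⟨c, d, hcd, hc, hd⟩
      exacts [⟨c, d, hcd, hc, hd⟩, ⟨d, c, hcd.symm, hd, hc⟩]
    have hac : (sepHypsOutside X 𝒥 a c).ncard = 0 := by
      rw [sepHypsOutside_eq_empty_of_mk_eq h𝒥 (ha.trans hc.symm), Set.ncard_empty]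
    have habc := ncard_sepHypsOutside_le_add (𝒥 := 𝒥) hX a b c
    have hcbd := ncard_sepHypsOutside_le_add (𝒥 := 𝒥) hX c b d
    have hcd1 := ncard_sepHypsOutside_le_one_of_adj (𝒥 := 𝒥) hcd
    have hdb := ih hd hb
    rw [Walk.length_cons]
    omega

namespace MedianGraph

lemma dist_adj_cases (hX : MedianGraph X) (w : V) {a b : V} (hab : X.Adj a b) :
    X.dist w b = X.dist w a + 1 ∨ X.dist w a = X.dist w b + 1 := by
  obtain ⟨m, ⟨hwab, habm, hwbm⟩, -⟩ := hX.2 w a b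
  unfold InInterval at hwab habm hwbm
  have h1 : X.dist a b = 1 := dist_eq_one_iff_adj.mpr hab
  have h1' : X.dist b a = 1 := dist_eq_one_iff_adj.mpr hab.symm
  rcases (by omega : X.dist a m = 0 ∨ X.dist m b = 0) with h0 | h0
  · obtain rfl := hX.1.dist_eq_zero_iff.mp h0
    omega
  · obtain rfl := hX.1.dist_eq_zero_iff.mp h0
    omega

lemma not_adj_of_adj_of_adj (hX : MedianGraph X) {a b c : V} (hab : X.Adj a b)
    (hac : X.Adj a c) : ¬ X.Adj b c := fun hbc => by
  have := hX.dist_adj_cases a hbc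
  rw [dist_eq_one_iff_adj.mpr hab, dist_eq_one_iff_adj.mpr hac] at this
  omega

/-- If `w` were closer to `c` than to `d`, both `a` and `c` would be medians of `w`, `b`, `d`. -/
lemma dist_square_imp (hX : MedianGraph X) {a b c d : V} (hab : X.Adj a b) (hbc : X.Adj b c)
    (hcd : X.Adj c d) (hda : X.Adj d a) (hac : a ≠ c) (hbd : b ≠ d) {w : V}
    (hw : X.dist w b = X.dist w a + 1) : X.dist w c = X.dist w d + 1 := by
  by_contra hwc
  have hwd := (hX.dist_adj_cases w hcd).resolve_right hwc
  have := hX.dist_adj_cases w hbc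
  have := hX.dist_adj_cases w hda
  have hbd2 : X.dist b d = 2 := by
    have := hX.1.one_lt_dist_of_ne_of_not_adj hbd (hX.not_adj_of_adj_of_adj hab hda.symm)
    have := hab.symm.reachable.dist_triangle_left (w := d)
    simp only [dist_eq_one_iff_adj.mpr hab.symm, dist_eq_one_iff_adj.mpr hda.symm] at this
    omega
  have hab1 := dist_eq_one_iff_adj.mpr hab
  have hba1 := dist_eq_one_iff_adj.mpr hab.symm
  have had1 := dist_eq_one_iff_adj.mpr hda.symm
  have hbc1 := dist_eq_one_iff_adj.mpr hbc
  have hcb1 := dist_eq_one_iff_adj.mpr hbc.symm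
  have hcd1 := dist_eq_one_iff_adj.mpr hcd
  refine hac ((hX.2 w b d).unique (y₁ := a) (y₂ := c) ?_ ?_) <;>
    refine ⟨?_, ?_, ?_⟩ <;> unfold InInterval <;> omega

lemma dist_square_iff (hX : MedianGraph X) {a b c d : V} (hab : X.Adj a b) (hbc : X.Adj b c)
    (hcd : X.Adj c d) (hda : X.Adj d a) (hac : a ≠ c) (hbd : b ≠ d) (w : V) :
    X.dist w b = X.dist w a + 1 ↔ X.dist w c = X.dist w d + 1 :=
  ⟨hX.dist_square_imp hab hbc hcd hda hac hbd,
    hX.dist_square_imp hcd.symm hbc.symm hab.symm hda.symm hbd.symm hac.symm⟩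

lemma exists_orientation_of_mem_hyperplaneOf (hX : MedianGraph X) {u v : V}
    (huv : X.Adj u v) {g : Sym2 V} (hg : g ∈ hyperplaneOf X s(u, v)) :
    ∃ a b, X.Adj a b ∧ g = s(a, b) ∧
      ∀ w, X.dist w v = X.dist w u + 1 ↔ X.dist w b = X.dist w a + 1 := by
  induction hg with
  | refl => exact ⟨u, v, huv, rfl, fun _ => Iff.rfl⟩
  | tail _ hrel ih =>
    obtain ⟨a, b, hab, rfl, hside⟩ := ih
    rcases hrel with ⟨x, y, z, hxy, hyz, hxz, -, -⟩ |
      ⟨p, q, r, s, hpq, hqr, hrs, hsp, hpr, -, hqs, -, he, rfl⟩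
    · exact (hX.not_adj_of_adj_of_adj hxy hxz hyz).elim
    · rcases Sym2.eq_iff.mp he with ⟨rfl, rfl⟩ | ⟨rfl, rfl⟩
      · exact ⟨s, r, hrs.symm, Sym2.eq_swap,
          fun w => (hside w).trans (hX.dist_square_iff hpq hqr hrs hsp hpr hqs w)⟩
      · exact ⟨r, s, hrs, rfl, fun w => (hside w).trans
          (hX.dist_square_iff hpq.symm hsp.symm hrs.symm hqr.symm hqs hpr w)⟩

lemma notMem_hyperplaneOf_of_same_side (hX : MedianGraph X) {u v w w' : V}
    (huv : X.Adj u v) (hw : X.dist w v = X.dist w u + 1) (hw' : X.dist w' v = X.dist w' u + 1) :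
    s(w, w') ∉ hyperplaneOf X s(u, v) := fun hmem => by
  obtain ⟨a, b, hab, he, hside⟩ := hX.exists_orientation_of_mem_hyperplaneOf huv hmem
  have h := (hside w).mp hw
  have h' := (hside w').mp hw'
  rcases Sym2.eq_iff.mp he with ⟨rfl, rfl⟩ | ⟨rfl, rfl⟩ <;> simp at h h'

lemma dist_step_side (hX : MedianGraph X) {u v w w' : V} (huv : X.Adj u v)
    (hww' : X.Adj w w') (hstep : X.dist w' u + 1 = X.dist w u)
    (hw : X.dist w v = X.dist w u + 1) : X.dist w' v = X.dist w' u + 1 :=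
  (hX.dist_adj_cases w' huv).resolve_right fun h => by
    have := hww'.symm.dist_le_dist_add_one v
    omega

/-- `a'` is a neighbour of `a` closer to `u`, and `m` the median of `a'`, `b`, `v`. -/
lemma exists_square_of_crossing (hX : MedianGraph X) {u v a b : V} (huv : X.Adj u v)
    (hab : X.Adj a b) (ha : X.dist a v = X.dist a u + 1) (hb : X.dist b u = X.dist b v + 1)
    (hpos : X.dist a u ≠ 0) :
    ∃ a' m, X.Adj a' m ∧ EdgeRel X s(a', m) s(a, b) ∧ X.dist a' u + 1 = X.dist a u ∧
      X.dist a' v = X.dist a' u + 1 ∧ X.dist m u = X.dist m v + 1 := by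
  obtain ⟨a', haa', ha'u⟩ := exists_adj_dist_add_one_eq hpos
  have ha'v := hX.dist_step_side huv haa' ha'u ha
  have hbu := hab.dist_le_dist_add_one u
  have hav := hab.symm.dist_le_dist_add_one v
  have ha'b : X.dist a' b = 2 := by
    have := haa'.dist_le_dist_add_one b
    have := hX.1.dist_triangle (u := b) (v := a') (w := u)
    have : X.dist b a' = X.dist a' b := dist_comm
    have : X.dist a b = 1 := dist_eq_one_iff_adj.mpr hab
    omega
  obtain ⟨m, ⟨h1, h2, h3⟩, -⟩ := hX.2 a' b v
  unfold InInterval at h1 h2 h3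
  have hbm : X.dist b m = X.dist m b := dist_comm
  have ha'm : X.Adj a' m := dist_eq_one_iff_adj.mp (by omega)
  have hmb : X.Adj m b := dist_eq_one_iff_adj.mp (by omega)
  have hmu := ha'm.dist_le_dist_add_one u
  have hbu' := hmb.dist_le_dist_add_one u
  refine ⟨a', m, ha'm, Or.inr ⟨a', m, b, a, ha'm, hmb, hab.symm, haa', ?_, ?_, ?_, ?_, rfl,
    Sym2.eq_swap⟩, ha'u, ha'v, by omega⟩
  · rintro rfl
    simp at ha'b
  · intro h
    rw [dist_eq_one_iff_adj.mpr h] at ha'b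
    omega
  · rintro rfl
    omega
  · intro h
    have := h.dist_le_dist_add_one v
    omega

lemma mem_hyperplaneOf_of_crossing (hX : MedianGraph X) {u v a b : V} (huv : X.Adj u v)
    (hab : X.Adj a b) (ha : X.dist a v = X.dist a u + 1) (hb : X.dist b u = X.dist b v + 1) :
    s(a, b) ∈ hyperplaneOf X s(u, v) := by
  obtain ⟨k, hk⟩ : ∃ k, X.dist a u = k := ⟨_, rfl⟩
  induction k generalizing a b with
  | zero =>
    obtain rfl := hX.1.dist_eq_zero_iff.mp hk
    have : X.dist b v = 0 := by
      have := dist_eq_one_iff_adj.mpr hab.symm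
      omega
    obtain rfl := hX.1.dist_eq_zero_iff.mp this
    exact ReflTransGen.refl
  | succ k ih =>
    obtain ⟨a', m, ha'm, hsq, ha'u, ha'v, hmu⟩ :=
      hX.exists_square_of_crossing huv hab ha hb (by omega)
    exact (ih ha'm ha'v hmu (by omega)).tail hsq

lemma separatesPts_hyperplaneOf (hX : MedianGraph X) {u v x y : V} (huv : X.Adj u v)
    (hx : X.dist x v = X.dist x u + 1) (hy : X.dist y u = X.dist y v + 1) :
    SeparatesPts X (hyperplaneOf X s(u, v)) x y := by
  rintro ⟨p⟩
  induction p with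
  | nil => omega
  | @cons x c _ h _ ih =>
    obtain ⟨hxc, hnot⟩ := deleteEdges_adj.mp h
    rcases hX.dist_adj_cases c huv with hc | hc
    · exact ih hc hy
    · exact hnot (hX.mem_hyperplaneOf_of_crossing huv hxc hx hc)

lemma reachable_deleteEdges_hyperplaneOf (hX : MedianGraph X) {u v w : V} (huv : X.Adj u v)
    (hw : X.dist w v = X.dist w u + 1) :
    (X.deleteEdges (hyperplaneOf X s(u, v))).Reachable w u := by
  obtain ⟨k, hk⟩ : ∃ k, X.dist w u = k := ⟨_, rfl⟩
  induction k generalizing w with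
  | zero => rw [hX.1.dist_eq_zero_iff.mp hk]
  | succ k ih =>
    obtain ⟨w', hww', hstep⟩ := exists_adj_dist_add_one_eq (by omega : X.dist w u ≠ 0)
    have hw' := hX.dist_step_side huv hww' hstep hw
    exact (deleteEdges_adj.mpr ⟨hww', hX.notMem_hyperplaneOf_of_same_side huv hw hw'⟩
      ).reachable.trans (ih hw' (by omega))

section GeodesicStep

variable {x u y : V}

lemma not_separatesPts_of_geodesic_step (hX : MedianGraph X) (hxu : X.Adj x u)
    (hu : X.dist u y + 1 = X.dist x y) : ¬ SeparatesPts X (hyperplaneOf X s(x, u)) u y := by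
  have hy : X.dist y x = X.dist y u + 1 := by rw [dist_comm, ← hu, dist_comm]
  rw [Sym2.eq_swap]
  exact not_not.mpr (hX.reachable_deleteEdges_hyperplaneOf hxu.symm hy).symm

lemma separatesPts_iff_of_geodesic_step (hX : MedianGraph X) (hxu : X.Adj x u)
    (hu : X.dist u y + 1 = X.dist x y) {J : Set (Sym2 V)} (hJ : IsHyperplane X J) :
    SeparatesPts X J x y ↔ J = hyperplaneOf X s(x, u) ∨ SeparatesPts X J u y := by
  by_cases hmem : s(x, u) ∈ J
  · obtain rfl := hJ.eq_hyperplaneOf hmem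
    refine iff_of_true (hX.separatesPts_hyperplaneOf hxu (by simp [hxu]) ?_) (Or.inl rfl)
    rw [dist_comm, ← hu, dist_comm]
  · rw [separatesPts_iff_of_adj hxu hmem y, or_iff_right]
    rintro rfl
    exact hmem ReflTransGen.refl

lemma sepHypsOutside_eq_of_geodesic_step (hX : MedianGraph X) (hxu : X.Adj x u)
    (hu : X.dist u y + 1 = X.dist x y) (hH : hyperplaneOf X s(x, u) ∈ 𝒥) :
    sepHypsOutside X 𝒥 x y = sepHypsOutside X 𝒥 u y := by
  ext J
  refine and_congr_right fun hJ => and_congr_right fun hJ𝒥 => ?_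
  rw [hX.separatesPts_iff_of_geodesic_step hxu hu hJ, or_iff_right]
  rintro rfl
  exact hJ𝒥 hH

lemma sepHypsOutside_eq_insert_of_geodesic_step (hX : MedianGraph X) (hxu : X.Adj x u)
    (hu : X.dist u y + 1 = X.dist x y) (hH : hyperplaneOf X s(x, u) ∉ 𝒥) :
    sepHypsOutside X 𝒥 x y = insert (hyperplaneOf X s(x, u)) (sepHypsOutside X 𝒥 u y) := by
  ext J
  rw [Set.mem_insert_iff]
  constructor
  · rintro ⟨hJ, hJ𝒥, hsep⟩
    exact ((hX.separatesPts_iff_of_geodesic_step hxu hu hJ).mp hsep).imp id (⟨hJ, hJ𝒥, ·⟩)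
  · rintro (rfl | ⟨hJ, hJ𝒥, hsep⟩)
    · have hJ := isHyperplane_hyperplaneOf hxu
      exact ⟨hJ, hH, (hX.separatesPts_iff_of_geodesic_step hxu hu hJ).mpr (Or.inl rfl)⟩
    · exact ⟨hJ, hJ𝒥, (hX.separatesPts_iff_of_geodesic_step hxu hu hJ).mpr (Or.inr hsep)⟩

end GeodesicStep

lemma collapseGraph_dist_le (hX : MedianGraph X) (x y : V) :
    (CollapseGraph X 𝒥).dist (Quotient.mk _ x) (Quotient.mk _ y) ≤
      (sepHypsOutside X 𝒥 x y).ncard := by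
  obtain ⟨n, hn⟩ : ∃ n, X.dist x y = n := ⟨_, rfl⟩
  induction n generalizing x with
  | zero => simp [hX.1.dist_eq_zero_iff.mp hn]
  | succ n ih =>
    obtain ⟨u, hxu, hu⟩ := exists_adj_dist_add_one_eq (by omega : X.dist x y ≠ 0)
    have ih := ih u (by omega)
    by_cases hH : hyperplaneOf X s(x, u) ∈ 𝒥
    · rwa [hX.sepHypsOutside_eq_of_geodesic_step hxu hu hH, mk_eq_of_hyperplaneOf_mem hxu hH]
    · have hnotMem : hyperplaneOf X s(x, u) ∉ sepHypsOutside X 𝒥 u y :=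
        fun h => hX.not_separatesPts_of_geodesic_step hxu hu h.2.2
      rw [hX.sepHypsOutside_eq_insert_of_geodesic_step hxu hu hH,
        Set.ncard_insert_of_notMem hnotMem (sepHypsOutside_finite hX.1 u y)]
      have := (collapseGraph_connected (𝒥 := 𝒥) hX.1).dist_triangle
        (u := Quotient.mk _ x) (v := Quotient.mk _ u) (w := Quotient.mk _ y)
      have := collapseGraph_dist_mk_le_one (𝒥 := 𝒥) hxu
      omega

end MedianGraph

/-- Distances in a hyperplane-collapse of a median graph count the separating
hyperplanes not in `𝒥`. -/
theorem stmt6 (X : SimpleGraph V) (hX : MedianGraph X)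
    (𝒥 : Set (Set (Sym2 V))) (h𝒥 : ∀ J ∈ 𝒥, IsHyperplane X J) (x y : V) :
    (CollapseGraph X 𝒥).dist (Quotient.mk _ x) (Quotient.mk _ y) =
      {J : Set (Sym2 V) | IsHyperplane X J ∧ J ∉ 𝒥 ∧ SeparatesPts X J x y}.ncard := by
  refine le_antisymm (hX.collapseGraph_dist_le x y) ?_
  obtain ⟨p, hp⟩ := (collapseGraph_connected hX.1).exists_walk_length_eq_dist
    (Quotient.mk (collapseSetoid X 𝒥) x) (Quotient.mk _ y)
  exact hp ▸ ncard_sepHypsOutside_le_length hX.1 h𝒥 p rfl rfl
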